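/- Let the set K(G) of compact subsets of G be directed by inclusion, and for each compact K ⊆ G choose u_K ∈ C_c(G) with 0 ≤ u_K ≤ 1 and u_K(x) = 1 for all x ∈ K. Then the net (u_K), regarded inside GL(G), is a bounded approximate identity for GL_0(G): ‖u_K·f − f‖_∞ → 0 for every f ∈ GL_0(G). -/

import Mathlib

set_option linter.unusedSectionVars false
set_option linter.unusedVariables false

open MeasureTheory ENNReal Complex Filter Set Topology

noncomputable section

namespace GLpaper

variable (G : Type) [Group G] [TopologicalSpace G] [MeasurableSpace G]

def cmAbs (μ : ComplexMeasure G) : Measure G :=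
  (ComplexMeasure.re μ).totalVariation + (ComplexMeasure.im μ).totalVariation

instance (μ : ComplexMeasure G) : IsFiniteMeasure (cmAbs G μ) := by
  unfold cmAbs SignedMeasure.totalVariation; infer_instance

structure MG where
  toCM : ComplexMeasure G
  regular : (cmAbs G toCM).Regular

def cInt (μ : ComplexMeasure G) (g : G → ℂ) : ℂ :=
  ((∫ x, g x ∂(ComplexMeasure.re μ).toJordanDecomposition.posPart) -
      ∫ x, g x ∂(ComplexMeasure.re μ).toJordanDecomposition.negPart) +
    Complex.I * ((∫ x, g x ∂(ComplexMeasure.im μ).toJordanDecomposition.posPart) -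
      ∫ x, g x ∂(ComplexMeasure.im μ).toJordanDecomposition.negPart)

structure GenFun where
  toFun : ∀ μ : MG G, Lp ℂ ⊤ (cmAbs G μ.toCM)
  compat : ∀ μ ν : MG G, cmAbs G μ.toCM ≪ cmAbs G ν.toCM →
    ⇑(toFun μ) =ᵐ[cmAbs G μ.toCM] ⇑(toFun ν)
  bdd : BddAbove (Set.range fun μ : MG G => ‖toFun μ‖)

namespace GenFun

variable {G}

theorem ext' {f g : GenFun G} (h : ∀ μ, f.toFun μ = g.toFun μ) : f = g := by
  cases f; cases g
  simp only [GenFun.mk.injEq]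
  exact funext h

instance : Zero (GenFun G) where
  zero :=
  { toFun := fun _ => 0
    compat := by
      intro μ ν h
      filter_upwards [Lp.coeFn_zero ℂ ⊤ (cmAbs G μ.toCM),
        (Lp.coeFn_zero ℂ ⊤ (cmAbs G ν.toCM)).filter_mono h.ae_le] with x e1 e2
      rw [e1, e2]
    bdd := ⟨0, by rintro r ⟨μ, rfl⟩; simp⟩ }

instance : Add (GenFun G) where
  add f g :=
  { toFun := fun μ => f.toFun μ + g.toFun μ
    compat := by
      intro μ ν h
      filter_upwards [f.compat μ ν h, g.compat μ ν h,
        Lp.coeFn_add (f.toFun μ) (g.toFun μ),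
        (Lp.coeFn_add (f.toFun ν) (g.toFun ν)).filter_mono h.ae_le] with x e1 e2 e3 e4
      simp only [e3, e4, Pi.add_apply, e1, e2]
    bdd := by
      obtain ⟨Cf, hCf⟩ := f.bdd
      obtain ⟨Cg, hCg⟩ := g.bdd
      refine ⟨Cf + Cg, ?_⟩
      rintro r ⟨μ, rfl⟩
      exact (norm_add_le _ _).trans (add_le_add (hCf ⟨μ, rfl⟩) (hCg ⟨μ, rfl⟩)) }

instance : Neg (GenFun G) where
  neg f :=
  { toFun := fun μ => -f.toFun μ
    compat := by
      intro μ ν h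
      filter_upwards [f.compat μ ν h, Lp.coeFn_neg (f.toFun μ),
        (Lp.coeFn_neg (f.toFun ν)).filter_mono h.ae_le] with x e1 e2 e3
      simp only [e2, e3, Pi.neg_apply, e1]
    bdd := by
      obtain ⟨Cf, hCf⟩ := f.bdd
      refine ⟨Cf, ?_⟩
      rintro r ⟨μ, rfl⟩
      simpa using hCf ⟨μ, rfl⟩ }

instance : SMul ℂ (GenFun G) where
  smul c f :=
  { toFun := fun μ => c • f.toFun μ
    compat := by
      intro μ ν h
      filter_upwards [f.compat μ ν h, Lp.coeFn_smul c (f.toFun μ),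
        (Lp.coeFn_smul c (f.toFun ν)).filter_mono h.ae_le] with x e1 e2 e3
      simp only [e2, e3, Pi.smul_apply, e1]
    bdd := by
      obtain ⟨Cf, hCf⟩ := f.bdd
      refine ⟨‖c‖ * Cf, ?_⟩
      rintro r ⟨μ, rfl⟩
      show ‖c • f.toFun μ‖ ≤ ‖c‖ * Cf
      rw [norm_smul]
      exact mul_le_mul_of_nonneg_left (hCf ⟨μ, rfl⟩) (norm_nonneg c) }

@[simp] theorem zero_toFun (μ : MG G) : (0 : GenFun G).toFun μ = 0 := rfl
@[simp] theorem add_toFun (f g : GenFun G) (μ : MG G) :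
    (f + g).toFun μ = f.toFun μ + g.toFun μ := rfl
@[simp] theorem neg_toFun (f : GenFun G) (μ : MG G) : (-f).toFun μ = -f.toFun μ := rfl
@[simp] theorem smul_toFun (c : ℂ) (f : GenFun G) (μ : MG G) :
    (c • f).toFun μ = c • f.toFun μ := rfl

instance : AddCommGroup (GenFun G) where
  add_assoc a b c := ext' fun μ => add_assoc _ _ _
  zero_add a := ext' fun μ => zero_add _
  add_zero a := ext' fun μ => add_zero _
  add_comm a b := ext' fun μ => add_comm _ _
  neg_add_cancel a := ext' fun μ => neg_add_cancel _
  nsmul := nsmulRec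
  zsmul := zsmulRec

instance : Module ℂ (GenFun G) where
  one_smul f := ext' fun μ => one_smul _ _
  mul_smul a b f := ext' fun μ => mul_smul _ _ _
  smul_zero a := ext' fun μ => smul_zero _
  smul_add a f g := ext' fun μ => smul_add _ _ _
  add_smul a b f := ext' fun μ => add_smul _ _ _
  zero_smul f := ext' fun μ => zero_smul _ _

/-- The norm on generalised functions. -/
def gnorm (f : GenFun G) : ℝ := ⨆ μ : MG G, ‖f.toFun μ‖

theorem gnorm_zero : gnorm (0 : GenFun G) = 0 := by
  rcases isEmpty_or_nonempty (MG G) with h | h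
  · exact Real.iSup_of_isEmpty _
  · simp [gnorm]

theorem norm_le_gnorm (f : GenFun G) (μ : MG G) : ‖f.toFun μ‖ ≤ gnorm f :=
  le_ciSup f.bdd μ

theorem gnorm_nonneg (f : GenFun G) : 0 ≤ gnorm f := by
  rcases isEmpty_or_nonempty (MG G) with h | h
  · rw [gnorm, Real.iSup_of_isEmpty]
  · exact le_trans (norm_nonneg _) (norm_le_gnorm f (Classical.arbitrary _))

theorem gnorm_le {f : GenFun G} {C : ℝ} (h0 : 0 ≤ C) (h : ∀ μ, ‖f.toFun μ‖ ≤ C) :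
    gnorm f ≤ C := by
  rcases isEmpty_or_nonempty (MG G) with hh | hh
  · rw [gnorm, Real.iSup_of_isEmpty]; exact h0
  · exact ciSup_le h

instance : NormedAddCommGroup (GenFun G) :=
  AddGroupNorm.toNormedAddCommGroup
  { toFun := gnorm
    map_zero' := gnorm_zero
    add_le' := by
      intro f g
      refine gnorm_le (add_nonneg (gnorm_nonneg f) (gnorm_nonneg g)) fun μ => ?_
      rw [add_toFun]
      exact (norm_add_le _ _).trans (add_le_add (norm_le_gnorm f μ) (norm_le_gnorm g μ))
    neg' := by
      intro f
      unfold gnorm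
      congr 1
      funext μ
      rw [neg_toFun, norm_neg]
    eq_zero_of_map_eq_zero' := by
      intro f hf
      refine ext' fun μ => ?_
      have h1 : ‖f.toFun μ‖ ≤ 0 := hf ▸ norm_le_gnorm f μ
      have : ‖f.toFun μ‖ = 0 := le_antisymm h1 (norm_nonneg _)
      simpa [norm_eq_zero] using this }

theorem norm_def (f : GenFun G) : ‖f‖ = gnorm f := rfl

instance : NormedSpace ℂ (GenFun G) where
  norm_smul_le c f := by
    refine gnorm_le (mul_nonneg (norm_nonneg c) (gnorm_nonneg f)) fun μ => ?_
    rw [smul_toFun, norm_smul]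
    exact mul_le_mul_of_nonneg_left (norm_le_gnorm f μ) (norm_nonneg c)

end GenFun

/-- A generalised function vanishes at infinity. -/
def MemGL0 (f : GenFun G) : Prop :=
  ∀ ε : ℝ, 0 < ε → ∃ K : Set G, IsCompact K ∧ ∀ μ : MG G,
    eLpNorm (Kᶜ.indicator ⇑(f.toFun μ)) ⊤ (cmAbs G μ.toCM) < ENNReal.ofReal ε

variable [T2Space G] [BorelSpace G]

theorem indicator_norm_mono {K L : Set G} (hKL : K ⊆ L) (g : G → ℂ) (x : G) :
    ‖Lᶜ.indicator g x‖ ≤ ‖Kᶜ.indicator g x‖ := by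
  by_cases hx : x ∈ Lᶜ
  · rw [Set.indicator_of_mem hx, Set.indicator_of_mem (Set.compl_subset_compl.mpr hKL hx)]
  · rw [Set.indicator_of_notMem hx]
    simp [norm_nonneg]

/-- The space `GL₀(G)` of generalised functions vanishing at infinity, as a
subspace of `GL(G)`. -/
def GL0 : Submodule ℂ (GenFun G) where
  carrier := {f | MemGL0 G f}
  zero_mem' := by
    intro ε hε
    refine ⟨∅, isCompact_empty, fun μ => ?_⟩
    have h0 : (∅ᶜ : Set G).indicator ⇑((0 : GenFun G).toFun μ)
        =ᵐ[cmAbs G μ.toCM] (0 : G → ℂ) := by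
      filter_upwards [Lp.coeFn_zero ℂ ⊤ (cmAbs G μ.toCM)] with x e1
      by_cases hx : x ∈ (∅ᶜ : Set G)
      · rw [Set.indicator_of_mem hx]; exact e1
      · rw [Set.indicator_of_notMem hx]; rfl
    rw [eLpNorm_congr_ae h0, eLpNorm_zero]
    exact ENNReal.ofReal_pos.mpr hε
  add_mem' := by
    intro f g hf hg ε hε
    obtain ⟨Kf, hKf, hf'⟩ := hf (ε / 2) (by linarith)
    obtain ⟨Kg, hKg, hg'⟩ := hg (ε / 2) (by linarith)
    refine ⟨Kf ∪ Kg, hKf.union hKg, fun μ => ?_⟩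
    have hmeas : MeasurableSet ((Kf ∪ Kg)ᶜ : Set G) :=
      ((hKf.union hKg).isClosed.measurableSet).compl
    have hsum : ((Kf ∪ Kg)ᶜ : Set G).indicator ⇑((f + g).toFun μ)
        =ᵐ[cmAbs G μ.toCM]
        ((Kf ∪ Kg)ᶜ : Set G).indicator ⇑(f.toFun μ) +
        ((Kf ∪ Kg)ᶜ : Set G).indicator ⇑(g.toFun μ) := by
      filter_upwards [Lp.coeFn_add (f.toFun μ) (g.toFun μ)] with x e1
      by_cases hx : x ∈ ((Kf ∪ Kg)ᶜ : Set G)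
      · simp only [Set.indicator_of_mem hx, Pi.add_apply, GenFun.add_toFun]
        rw [e1]; rfl
      · simp only [Pi.add_apply, Set.indicator_of_notMem hx, add_zero]
    calc eLpNorm (((Kf ∪ Kg)ᶜ : Set G).indicator ⇑((f + g).toFun μ)) ⊤ (cmAbs G μ.toCM)
        = eLpNorm (((Kf ∪ Kg)ᶜ : Set G).indicator ⇑(f.toFun μ) +
            ((Kf ∪ Kg)ᶜ : Set G).indicator ⇑(g.toFun μ)) ⊤ (cmAbs G μ.toCM) :=
          eLpNorm_congr_ae hsum
      _ ≤ eLpNorm (((Kf ∪ Kg)ᶜ : Set G).indicator ⇑(f.toFun μ)) ⊤ (cmAbs G μ.toCM) +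
            eLpNorm (((Kf ∪ Kg)ᶜ : Set G).indicator ⇑(g.toFun μ)) ⊤ (cmAbs G μ.toCM) :=
          eLpNorm_add_le ((Lp.aestronglyMeasurable (f.toFun μ)).indicator hmeas)
            ((Lp.aestronglyMeasurable (g.toFun μ)).indicator hmeas) le_top
      _ ≤ eLpNorm ((Kfᶜ : Set G).indicator ⇑(f.toFun μ)) ⊤ (cmAbs G μ.toCM) +
            eLpNorm ((Kgᶜ : Set G).indicator ⇑(g.toFun μ)) ⊤ (cmAbs G μ.toCM) := by
          gcongr
          · exact eLpNorm_mono fun x => indicator_norm_mono G Set.subset_union_left _ x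
          · exact eLpNorm_mono fun x => indicator_norm_mono G Set.subset_union_right _ x
      _ < ENNReal.ofReal (ε / 2) + ENNReal.ofReal (ε / 2) :=
          ENNReal.add_lt_add (hf' μ) (hg' μ)
      _ = ENNReal.ofReal ε := by
          rw [← ENNReal.ofReal_add (by linarith) (by linarith)]
          norm_num
  smul_mem' := by
    intro c f hf ε hε
    obtain ⟨K, hK, hf'⟩ := hf (ε / (‖c‖ + 1)) (by positivity)
    refine ⟨K, hK, fun μ => ?_⟩
    have hsmul : (Kᶜ : Set G).indicator ⇑((c • f).toFun μ)
        =ᵐ[cmAbs G μ.toCM] c • (Kᶜ : Set G).indicator ⇑(f.toFun μ) := by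
      filter_upwards [Lp.coeFn_smul c (f.toFun μ)] with x e1
      by_cases hx : x ∈ (Kᶜ : Set G)
      · simp only [Set.indicator_of_mem hx, Pi.smul_apply, GenFun.smul_toFun]
        rw [e1]; rfl
      · simp only [Pi.smul_apply, Set.indicator_of_notMem hx, smul_zero]
    calc eLpNorm ((Kᶜ : Set G).indicator ⇑((c • f).toFun μ)) ⊤ (cmAbs G μ.toCM)
        = (‖c‖₊ : ℝ≥0∞) * eLpNorm ((Kᶜ : Set G).indicator ⇑(f.toFun μ)) ⊤ (cmAbs G μ.toCM) := by
          rw [eLpNorm_congr_ae hsmul, eLpNorm_const_smul, enorm_eq_nnnorm]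
      _ ≤ ENNReal.ofReal ‖c‖ * ENNReal.ofReal (ε / (‖c‖ + 1)) := by
          rw [ofReal_norm, enorm_eq_nnnorm]
          gcongr
          exact (hf' μ).le
      _ = ENNReal.ofReal (‖c‖ * (ε / (‖c‖ + 1))) :=
          (ENNReal.ofReal_mul (norm_nonneg c)).symm
      _ < ENNReal.ofReal ε := by
          refine (ENNReal.ofReal_lt_ofReal_iff hε).mpr ?_
          have hpos : (0 : ℝ) < ‖c‖ + 1 := by positivity
          rw [mul_div_assoc', div_lt_iff₀ hpos]
          nlinarith [norm_nonneg c]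


section Pairing

theorem rePos_le (μ : ComplexMeasure G) :
    (ComplexMeasure.re μ).toJordanDecomposition.posPart ≤ cmAbs G μ :=
  (Measure.le_add_right (le_refl _) :
      (ComplexMeasure.re μ).toJordanDecomposition.posPart ≤ (ComplexMeasure.re μ).totalVariation).trans
    (Measure.le_add_right (le_refl _))

theorem reNeg_le (μ : ComplexMeasure G) :
    (ComplexMeasure.re μ).toJordanDecomposition.negPart ≤ cmAbs G μ :=
  (Measure.le_add_left (le_refl _) :
      (ComplexMeasure.re μ).toJordanDecomposition.negPart ≤ (ComplexMeasure.re μ).totalVariation).trans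
    (Measure.le_add_right (le_refl _))

theorem imPos_le (μ : ComplexMeasure G) :
    (ComplexMeasure.im μ).toJordanDecomposition.posPart ≤ cmAbs G μ :=
  (Measure.le_add_right (le_refl _) :
      (ComplexMeasure.im μ).toJordanDecomposition.posPart ≤ (ComplexMeasure.im μ).totalVariation).trans
    (Measure.le_add_left (le_refl _))

theorem imNeg_le (μ : ComplexMeasure G) :
    (ComplexMeasure.im μ).toJordanDecomposition.negPart ≤ cmAbs G μ :=
  (Measure.le_add_left (le_refl _) :
      (ComplexMeasure.im μ).toJordanDecomposition.negPart ≤ (ComplexMeasure.im μ).totalVariation).trans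
    (Measure.le_add_left (le_refl _))

variable {G}

theorem ae_norm_le_of_Lp_top {μ : Measure G} (f : Lp ℂ ⊤ μ) :
    ∀ᵐ x ∂μ, ‖f x‖ ≤ ‖f‖ := by
  have h := enorm_ae_le_eLpNormEssSup (⇑f) μ
  filter_upwards [h] with x hx
  have hlt : eLpNormEssSup (⇑f) μ < ⊤ := by
    have h2 := Lp.eLpNorm_lt_top f
    rwa [eLpNorm_exponent_top] at h2
  have h3 : ((‖f x‖₊ : ℝ≥0∞)).toReal ≤ (eLpNormEssSup (⇑f) μ).toReal :=
    ENNReal.toReal_mono hlt.ne hx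
  simpa [Lp.norm_def, eLpNorm_exponent_top] using h3

theorem integrable_part {μ : Measure G} {m : Measure G} [IsFiniteMeasure m] (hm : m ≤ μ)
    (f : Lp ℂ ⊤ μ) : Integrable (⇑f) m :=
  MemLp.integrable le_top ((Lp.memLp f).mono_measure hm)

variable (G)

/-- The duality pairing between generalised functions and measures,
`⟨f, μ⟩ = ∫ f_μ dμ`. -/
def pair (f : GenFun G) (μ : MG G) : ℂ := cInt G μ.toCM ⇑(f.toFun μ)

theorem pair_add (f g : GenFun G) (μ : MG G) :
    pair G (f + g) μ = pair G f μ + pair G g μ := by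
  have key : ∀ m : Measure G, m ≤ cmAbs G μ.toCM → IsFiniteMeasure m →
      ∫ x, ((f + g).toFun μ) x ∂m = (∫ x, (f.toFun μ) x ∂m) + ∫ x, (g.toFun μ) x ∂m := by
    intro m hm hfin
    have hae : ⇑((f + g).toFun μ) =ᵐ[m] ⇑(f.toFun μ) + ⇑(g.toFun μ) := by
      exact (Measure.absolutelyContinuous_of_le hm).ae_le (Lp.coeFn_add (f.toFun μ) (g.toFun μ))
    rw [integral_congr_ae hae]
    exact integral_add (integrable_part hm (f.toFun μ)) (integrable_part hm (g.toFun μ))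
  unfold pair cInt
  rw [key _ (rePos_le G μ.toCM) inferInstance, key _ (reNeg_le G μ.toCM) inferInstance,
    key _ (imPos_le G μ.toCM) inferInstance, key _ (imNeg_le G μ.toCM) inferInstance]
  ring

theorem pair_smul (c : ℂ) (f : GenFun G) (μ : MG G) :
    pair G (c • f) μ = c * pair G f μ := by
  have key : ∀ m : Measure G, m ≤ cmAbs G μ.toCM →
      ∫ x, ((c • f).toFun μ) x ∂m = c * ∫ x, (f.toFun μ) x ∂m := by
    intro m hm
    have hae : ⇑((c • f).toFun μ) =ᵐ[m] c • ⇑(f.toFun μ) :=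
      (Measure.absolutelyContinuous_of_le hm).ae_le (Lp.coeFn_smul c (f.toFun μ))
    rw [integral_congr_ae hae]
    simpa using integral_smul c (⇑(f.toFun μ))
  unfold pair cInt
  rw [key _ (rePos_le G μ.toCM), key _ (reNeg_le G μ.toCM),
    key _ (imPos_le G μ.toCM), key _ (imNeg_le G μ.toCM)]
  ring

/-- The total mass bound associated to a measure. -/
def massBound (μ : MG G) : ℝ :=
  ((cmAbs G μ.toCM) Set.univ).toReal

theorem pair_norm_le (f : GenFun G) (μ : MG G) :
    ‖pair G f μ‖ ≤ 4 * massBound G μ * ‖f‖ := by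
  have key : ∀ m : Measure G, m ≤ cmAbs G μ.toCM → IsFiniteMeasure m →
      ‖∫ x, (f.toFun μ) x ∂m‖ ≤ massBound G μ * ‖f‖ := by
    intro m hm hfin
    have hb : ∀ᵐ x ∂m, ‖(f.toFun μ) x‖ ≤ ‖f.toFun μ‖ :=
      (Measure.absolutelyContinuous_of_le hm).ae_le (ae_norm_le_of_Lp_top (f.toFun μ))
    have h1 : ‖∫ x, (f.toFun μ) x ∂m‖ ≤ ‖f.toFun μ‖ * (m Set.univ).toReal :=
      norm_integral_le_of_norm_le_const hb
    have h2 : (m Set.univ).toReal ≤ massBound G μ := by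
      refine ENNReal.toReal_mono (measure_ne_top _ _) (hm Set.univ)
    calc ‖∫ x, (f.toFun μ) x ∂m‖ ≤ ‖f.toFun μ‖ * (m Set.univ).toReal := h1
      _ ≤ ‖f‖ * massBound G μ := by
          apply mul_le_mul (GenFun.norm_le_gnorm f μ) h2 ENNReal.toReal_nonneg
          exact (norm_nonneg _).trans (GenFun.norm_le_gnorm f μ)
      _ = massBound G μ * ‖f‖ := mul_comm _ _
  unfold pair cInt
  have k1 := key _ (rePos_le G μ.toCM) inferInstance
  have k2 := key _ (reNeg_le G μ.toCM) inferInstance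
  have k3 := key _ (imPos_le G μ.toCM) inferInstance
  have k4 := key _ (imNeg_le G μ.toCM) inferInstance
  calc ‖_ + _‖ ≤ _ := norm_add_le _ _
    _ ≤ 4 * massBound G μ * ‖f‖ := by
        have e1 := norm_sub_le (∫ x, (f.toFun μ) x ∂(ComplexMeasure.re μ.toCM).toJordanDecomposition.posPart)
          (∫ x, (f.toFun μ) x ∂(ComplexMeasure.re μ.toCM).toJordanDecomposition.negPart)
        have e2 := norm_sub_le (∫ x, (f.toFun μ) x ∂(ComplexMeasure.im μ.toCM).toJordanDecomposition.posPart)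
          (∫ x, (f.toFun μ) x ∂(ComplexMeasure.im μ.toCM).toJordanDecomposition.negPart)
        have e3 : ‖Complex.I * ((∫ x, (f.toFun μ) x ∂(ComplexMeasure.im μ.toCM).toJordanDecomposition.posPart) -
            ∫ x, (f.toFun μ) x ∂(ComplexMeasure.im μ.toCM).toJordanDecomposition.negPart)‖ =
            ‖(∫ x, (f.toFun μ) x ∂(ComplexMeasure.im μ.toCM).toJordanDecomposition.posPart) -
            ∫ x, (f.toFun μ) x ∂(ComplexMeasure.im μ.toCM).toJordanDecomposition.negPart‖ := by
          rw [norm_mul, Complex.norm_I, one_mul]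
        rw [e3]
        nlinarith [k1, k2, k3, k4]

/-- The canonical embedding of `M(G)` into the dual of `GL(G)` (w.r.t. the
pairing `⟨f, η⟩ = ∫ f_η dη`), i.e. `Ψ⁻¹`-transpose. -/
def measFun (η : MG G) : GenFun G →L[ℂ] ℂ :=
  LinearMap.mkContinuous
    { toFun := fun f => pair G f η
      map_add' := fun f g => pair_add G f g η
      map_smul' := fun c f => pair_smul G c f η }
    (4 * massBound G η) (fun f => pair_norm_le G f η)

end Pairing


/-- The dual space `GL₀(G)*`. -/
abbrev DualGL0 := ↥(GL0 G) →L[ℂ] ℂ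

/-- The second dual `M(G)** = GL(G)*`. -/
abbrev DualGL := GenFun G →L[ℂ] ℂ

/-- The embedding of `M(G)` into `GL₀(G)*`. -/
def measFun0 (η : MG G) : DualGL0 G := (measFun G η).comp (GL0 G).subtypeL

/-- The restriction map `M(G)** → GL₀(G)*`. -/
def restrict0 (m : DualGL G) : DualGL0 G := m.comp (GL0 G).subtypeL


open scoped ZeroAtInfty

section Predicates

/-- A generalised function is positive (in the C*-algebra sense), equivalently
all its coordinates are a.e. nonnegative. -/
def NonnegGF (f : GenFun G) : Prop :=
  ∀ μ : MG G, ∀ᵐ x ∂(cmAbs G μ.toCM), ∃ r : ℝ, 0 ≤ r ∧ (f.toFun μ) x = r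

/-- A complex measure is positive. -/
def NonnegCM (μ : ComplexMeasure G) : Prop :=
  ∀ A : Set G, MeasurableSet A → ∃ r : ℝ, 0 ≤ r ∧ μ A = r

/-- `g` represents the pointwise function `u` as a generalised function. -/
def IsRepFun (u : G → ℂ) (g : GenFun G) : Prop :=
  ∀ μ : MG G, ⇑(g.toFun μ) =ᵐ[cmAbs G μ.toCM] u

/-- `g = χ_K ⬝ f` coordinatewise. -/
def IsIndMul (K : Set G) (f g : GenFun G) : Prop :=
  ∀ μ : MG G, ⇑(g.toFun μ) =ᵐ[cmAbs G μ.toCM] K.indicator ⇑(f.toFun μ)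

/-- `g = u ⬝ f` coordinatewise. -/
def IsMulFun (u : G → ℂ) (f g : GenFun G) : Prop :=
  ∀ μ : MG G, ⇑(g.toFun μ) =ᵐ[cmAbs G μ.toCM] fun x => u x * (f.toFun μ) x

/-- `conv` is the convolution product of `M(G)`:
`⟨μ ∗ ν, g⟩ = ∫∫ g(xy) dμ(x) dν(y)` for `g ∈ C₀(G)`. -/
def IsConvOp (conv : MG G → MG G → MG G) : Prop :=
  ∀ μ ν : MG G, ∀ g : C₀(G, ℂ),
    cInt G (conv μ ν).toCM ⇑g = cInt G μ.toCM fun x => cInt G ν.toCM fun y => g (x * y)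

/-- `circ ζ f` is the generalised function `ζ ∘ f`, satisfying
`⟨ζ ∘ f, μ⟩ = ⟨f, ζ ∗ μ⟩`. -/
def IsLCirc (conv : MG G → MG G → MG G) (circ : MG G → GenFun G → GenFun G) : Prop :=
  ∀ (ζ : MG G) (f : GenFun G) (μ : MG G), pair G (circ ζ f) μ = pair G f (conv ζ μ)

/-- `rcirc f ζ` is the generalised function `f ∘ ζ`, satisfying
`⟨f ∘ ζ, μ⟩ = ⟨f, μ ∗ ζ⟩`. -/
def IsRCirc (conv : MG G → MG G → MG G) (rcirc : GenFun G → MG G → GenFun G) : Prop :=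
  ∀ (f : GenFun G) (ζ : MG G) (μ : MG G), pair G (rcirc f ζ) μ = pair G f (conv μ ζ)

/-- The map `ζ ∘ ·` restricted to `GL₀(G)` (by Lemma 3.3 it maps `GL₀(G)` to
itself). -/
def IsLCirc0 (conv : MG G → MG G → MG G) (circ0 : MG G → ↥(GL0 G) → ↥(GL0 G)) : Prop :=
  ∀ (ζ : MG G) (f : ↥(GL0 G)) (μ : MG G), pair G (circ0 ζ f : GenFun G) μ = pair G (f : GenFun G) (conv ζ μ)

/-- The map `· ∘ ζ` restricted to `GL₀(G)`. -/
def IsRCirc0 (conv : MG G → MG G → MG G) (rcirc0 : ↥(GL0 G) → MG G → ↥(GL0 G)) : Prop :=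
  ∀ (f : ↥(GL0 G)) (ζ : MG G) (μ : MG G), pair G (rcirc0 f ζ : GenFun G) μ = pair G (f : GenFun G) (conv μ ζ)

/-- `lt0 n f` is the generalised function `n·f ∈ GL₀(G)` determined by
`⟨n f, ζ⟩ = ⟨n, ζ ∘ f⟩`. -/
def IsLT0 (circ0 : MG G → ↥(GL0 G) → ↥(GL0 G)) (lt0 : DualGL0 G → ↥(GL0 G) → ↥(GL0 G)) : Prop :=
  ∀ (n : DualGL0 G) (f : ↥(GL0 G)) (ζ : MG G),
    pair G (lt0 n f : GenFun G) ζ = n (circ0 ζ f)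

/-- The Arens-type product `⊙` on `GL₀(G)*`: `⟨m ⊙ n, f⟩ = ⟨m, n f⟩`. -/
def IsOdot0 (lt0 : DualGL0 G → ↥(GL0 G) → ↥(GL0 G))
    (odot : DualGL0 G → DualGL0 G → DualGL0 G) : Prop :=
  ∀ (m n : DualGL0 G) (f : ↥(GL0 G)), odot m n f = m (lt0 n f)

/-- `ltF n f` is the generalised function `n·f` determined by
`⟨n f, ζ⟩ = ⟨n, ζ ∘ f⟩`, for `n ∈ M(G)** = GL(G)*`. -/
def IsLTF (circ : MG G → GenFun G → GenFun G) (ltF : DualGL G → GenFun G → GenFun G) : Prop :=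
  ∀ (n : DualGL G) (f : GenFun G) (ζ : MG G), pair G (ltF n f) ζ = n (circ ζ f)

/-- The first Arens product `⊙` on `M(G)**`: `⟨m ⊙ n, f⟩ = ⟨m, n f⟩`. -/
def IsOdotF (ltF : DualGL G → GenFun G → GenFun G)
    (odotF : DualGL G → DualGL G → DualGL G) : Prop :=
  ∀ (m n : DualGL G) (f : GenFun G), odotF m n f = m (ltF n f)

/-- A functional in `GL₀(G)*` has compact carrier `K`. -/
def HasCarrier0 (m : DualGL0 G) (K : Set G) : Prop :=
  IsCompact K ∧ ∀ f g : ↥(GL0 G), IsIndMul G K (f : GenFun G) (g : GenFun G) → m g = m f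

/-- A functional in `M(G)**` has compact carrier `K`. -/
def HasCarrierF (m : DualGL G) (K : Set G) : Prop :=
  IsCompact K ∧ ∀ f g : GenFun G, IsIndMul G K f g → m g = m f

/-- `M_c(G)**`, the norm closure of the set of functionals with compact carrier
in `M(G)**`. -/
def McSet : Set (DualGL G) := closure {m : DualGL G | ∃ K : Set G, HasCarrierF G m K}

/-- A positive functional. -/
def IsPosFunc0 (m : DualGL0 G) : Prop :=
  ∀ f : ↥(GL0 G), NonnegGF G (f : GenFun G) → ∃ r : ℝ, 0 ≤ r ∧ m f = r

/-- A positive functional on `GL(G)`. -/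
def IsPosFuncF (m : DualGL G) : Prop :=
  ∀ f : GenFun G, NonnegGF G f → ∃ r : ℝ, 0 ≤ r ∧ m f = r

/-- The operator `T` maps the unit ball of `S` into a norm-compact set
(relative compactness of the image of the unit ball). -/
def CCBallOn (T : DualGL0 G → DualGL0 G) (S : Set (DualGL0 G)) : Prop :=
  ∃ K : Set (DualGL0 G), IsCompact K ∧ ∀ n ∈ S, ‖n‖ ≤ 1 → T n ∈ K

/-- The operator `T` maps the unit ball of `S` into a weakly compact set. -/
def WCCBallOn (T : DualGL0 G → DualGL0 G) (S : Set (DualGL0 G)) : Prop :=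
  ∃ K : Set (WeakSpace ℂ (DualGL0 G)), IsCompact K ∧
    ∀ n ∈ S, ‖n‖ ≤ 1 → toWeakSpace ℂ (DualGL0 G) (T n) ∈ K

/-- The image of `M_a(G)` in `GL₀(G)*`. -/
def MaSet (lam : Measure G) : Set (DualGL0 G) :=
  {n : DualGL0 G | ∃ σ : MG G, cmAbs G σ.toCM ≪ lam ∧ n = measFun0 G σ}

end Predicates

end GLpaper

open GLpaper

theorem aux_norm_le {α : Type*} [MeasurableSpace α] {m : Measure α} (h : Lp ℂ ⊤ m) {C : ℝ}
    (hC : 0 ≤ C) (hb : ∀ᵐ x ∂m, ‖h x‖ ≤ C) : ‖h‖ ≤ C := by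
  rw [Lp.norm_def, eLpNorm_exponent_top]
  have := eLpNormEssSup_le_of_ae_bound (μ := m) hb
  calc (eLpNormEssSup (⇑h) m).toReal ≤ (ENNReal.ofReal C).toReal :=
        ENNReal.toReal_mono ENNReal.ofReal_ne_top this
    _ = C := ENNReal.toReal_ofReal hC

/-- The net `(u_K)`, indexed by the compact subsets of `G`
directed by inclusion, where `u_K ∈ C_c(G)` satisfies `0 ≤ u_K ≤ 1` and
`u_K = 1` on `K`, is a bounded approximate identity for `GL₀(G)`:
every such `u_K` is an element of `GL₀(G)` of norm at most `1`, and
`‖u_K·f − f‖_∞ → 0` along the net for every `f ∈ GL₀(G)`. -/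
theorem stmt_1 (G : Type) [Group G] [TopologicalSpace G] [IsTopologicalGroup G]
    [LocallyCompactSpace G] [T2Space G] [MeasurableSpace G] [BorelSpace G] :
    (∀ (K : Set G) (u : G → ℝ), IsCompact K → Continuous u → HasCompactSupport u →
      (∀ x, 0 ≤ u x ∧ u x ≤ 1) → (∀ x ∈ K, u x = 1) →
      ∀ g : GenFun G, IsRepFun G (fun x => (u x : ℂ)) g → MemGL0 G g ∧ ‖g‖ ≤ 1) ∧
    (∀ f : GenFun G, MemGL0 G f → ∀ ε : ℝ, 0 < ε → ∃ K₀ : Set G, IsCompact K₀ ∧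
      ∀ (K : Set G) (u : G → ℝ), IsCompact K → K₀ ⊆ K → Continuous u →
        HasCompactSupport u → (∀ x, 0 ≤ u x ∧ u x ≤ 1) → (∀ x ∈ K, u x = 1) →
        ∀ g : GenFun G, IsMulFun G (fun x => (u x : ℂ)) f g → ‖g - f‖ < ε) := by
  constructor
  · intro K u hK hu hcs hle hone g hg
    constructor
    · intro ε hε
      refine ⟨tsupport u, hcs, fun μ => ?_⟩
      have h0 : (tsupport u)ᶜ.indicator ⇑(g.toFun μ) =ᵐ[cmAbs G μ.toCM] (0 : G → ℂ) := by
        filter_upwards [hg μ] with x hx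
        by_cases hxm : x ∈ (tsupport u)ᶜ
        · rw [Set.indicator_of_mem hxm, hx,
            image_eq_zero_of_notMem_tsupport (f := u) hxm, Complex.ofReal_zero]
          rfl
        · rw [Set.indicator_of_notMem hxm]; rfl
      rw [eLpNorm_congr_ae h0, eLpNorm_zero]
      exact ENNReal.ofReal_pos.mpr hε
    · rw [GenFun.norm_def]
      refine GenFun.gnorm_le zero_le_one fun μ => ?_
      refine aux_norm_le _ zero_le_one ?_
      filter_upwards [hg μ] with x hx
      rw [hx, Complex.norm_real, Real.norm_eq_abs, _root_.abs_of_nonneg (hle x).1]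
      exact (hle x).2
  · intro f hf ε hε
    obtain ⟨K₀, hK₀, hbound⟩ := hf (ε / 2) (by linarith)
    refine ⟨K₀, hK₀, fun K u hK' hK₀K hu hcs hle hone g hg => ?_⟩
    have key : ∀ μ : MG G, ‖(g - f).toFun μ‖ ≤ ε / 2 := by
      intro μ
      have hsub : ⇑((g - f).toFun μ) =ᵐ[cmAbs G μ.toCM]
          fun x => ((u x : ℂ) - 1) * (f.toFun μ) x := by
        have : (g - f).toFun μ = g.toFun μ + -(f.toFun μ) := rfl
        rw [this]
        filter_upwards [Lp.coeFn_add (g.toFun μ) (-(f.toFun μ)),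
          Lp.coeFn_neg (f.toFun μ), hg μ] with x e1 e2 e3
        simp only [e1, Pi.add_apply, e2, Pi.neg_apply, e3]
        ring
      have hmono : ∀ᵐ x ∂(cmAbs G μ.toCM),
          ‖((u x : ℂ) - 1) * (f.toFun μ) x‖ ≤ ‖K₀ᶜ.indicator ⇑(f.toFun μ) x‖ := by
        refine Filter.Eventually.of_forall fun x => ?_
        by_cases hx : x ∈ K₀
        · rw [hone x (hK₀K hx)]
          simp
        · rw [Set.indicator_of_mem (Set.mem_compl hx), norm_mul]
          have h1 : ‖(u x : ℂ) - 1‖ ≤ 1 := by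
            rw [show ((u x : ℂ) - 1) = ((u x - 1 : ℝ) : ℂ) by push_cast; ring,
              Complex.norm_real, Real.norm_eq_abs, abs_le]
            constructor <;> nlinarith [(hle x).1, (hle x).2]
          calc ‖(u x : ℂ) - 1‖ * ‖(f.toFun μ) x‖ ≤ 1 * ‖(f.toFun μ) x‖ :=
                mul_le_mul_of_nonneg_right h1 (norm_nonneg _)
            _ = ‖(f.toFun μ) x‖ := one_mul _
      have hel : eLpNorm (⇑((g - f).toFun μ)) ⊤ (cmAbs G μ.toCM) ≤
          eLpNorm (K₀ᶜ.indicator ⇑(f.toFun μ)) ⊤ (cmAbs G μ.toCM) := by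
        rw [eLpNorm_congr_ae hsub]
        exact eLpNorm_mono_ae hmono
      have hlt := hel.trans_lt (hbound μ)
      rw [Lp.norm_def]
      calc (eLpNorm (⇑((g - f).toFun μ)) ⊤ (cmAbs G μ.toCM)).toReal
          ≤ (ENNReal.ofReal (ε / 2)).toReal :=
            ENNReal.toReal_mono ENNReal.ofReal_ne_top hlt.le
        _ = ε / 2 := ENNReal.toReal_ofReal (by linarith)
    have : ‖g - f‖ ≤ ε / 2 := GenFun.gnorm_le (by linarith) key
    linarith


end
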